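/- For arbitrary scalars p, q, r, the skew-symmetric bilinear map φ_7(p,q,r) on h_2 defined by φ_7(e_1,e_3) = p e_1, φ_7(e_2,e_3) = e_1 + q e_2, φ_7(e_3,e_4) = −e_2 − r e_4, φ_7(e_3,e_5) = −(q+r)e_5, and zero otherwise, is a 2-cocycle of h_2 with adjoint coefficients, and the bracket [x,y]_t = [x,y] + t φ_7(p,q,r)(x,y) satisfies the Jacobi identity for every t. -/

import Mathlib

/-!
Write `φ₇ = ε ∧ D` with `ε = e₃*` and `D` a derivation of `h₂`. Since `ε` vanishes on
`[h₂, h₂] = ℝ e₅`, the cup product of the 1-cocycle `ε` with the derivation `D` is a 2-cocycle; since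
moreover `ε ∘ D` is a multiple of `ε`, the bracket `ε ∧ D` satisfies the Jacobi identity on its own.
The Jacobiator of `[·,·] + t φ` is `J([·,·]) - t δφ + t² J(φ)`, and all three terms vanish.
-/

noncomputable section

/-- The underlying space of the 5-dimensional Heisenberg Lie algebra `h₂`. -/
abbrev V : Type := Fin 5 → ℝ

/-- Basis vectors: `e 0, …, e 4` are `e₁, …, e₅`. -/
def e (i : Fin 5) : V := Pi.single i 1

/-- The Heisenberg bracket on `h₂`: `[e₁,e₃] = e₅`, `[e₂,e₄] = e₅`. -/
def br (x y : V) : V :=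
  (x 0 * y 2 - x 2 * y 0 + x 1 * y 3 - x 3 * y 1) • e 4

/-- The deformed bracket `[x,y]_t = [x,y] + t • φ x y`. -/
def brt (t : ℝ) (φ : V → V → V) (x y : V) : V := br x y + t • φ x y

/-- The Chevalley–Eilenberg 2-cocycle condition (adjoint coefficients) for a
skew-symmetric 2-cochain `φ` on `h₂`. -/
def IsCocycle (φ : V → V → V) : Prop :=
  ∀ x y z : V,
    φ (br x y) z - φ (br x z) y + φ (br y z) x
      - br x (φ y z) + br y (φ x z) - br z (φ x y) = 0

/-- `φ₇(p,q,r)`: `(e₁,e₃) ↦ p e₁`, `(e₂,e₃) ↦ e₁ + q e₂`, `(e₃,e₄) ↦ −e₂ − r e₄`, `(e₃,e₅) ↦ −(q+r)e₅`, zero otherwise. -/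
def phi7 (p q r : ℝ) (x y : V) : V :=
  (x 0 * y 2 - x 2 * y 0) • (p • e 0)
  + (x 1 * y 2 - x 2 * y 1) • (e 0 + q • e 1)
  + (x 2 * y 3 - x 3 * y 2) • (-e 1 - r • e 3)
  + (x 2 * y 4 - x 4 * y 2) • ((-(q + r)) • e 4)

section Deformation

variable {R M : Type*} [CommRing R] [AddCommGroup M] [Module R M]

def jacobiator (B : M →ₗ[R] M →ₗ[R] M) (x y z : M) : M :=
  B x (B y z) + B y (B z x) + B z (B x y)

def coboundary (B Φ : M →ₗ[R] M →ₗ[R] M) (x y z : M) : M :=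
  Φ (B x y) z - Φ (B x z) y + Φ (B y z) x - B x (Φ y z) + B y (Φ x z) - B z (Φ x y)

theorem jacobiator_add_smul (B Φ : M →ₗ[R] M →ₗ[R] M) (t : R)
    (hB : ∀ x y, B y x = -B x y) (hΦ : ∀ x y, Φ y x = -Φ x y) (x y z : M) :
    jacobiator (B + t • Φ) x y z
      = jacobiator B x y z - t • coboundary B Φ x y z + t ^ 2 • jacobiator Φ x y z := by
  simp only [jacobiator, coboundary, LinearMap.add_apply, LinearMap.smul_apply, map_add,
    map_smul]
  rw [hΦ x (B y z), hΦ y (B x z), hΦ z (B x y), hB x z, hΦ x z]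
  simp only [map_neg]
  module

def wedge (ε : M →ₗ[R] R) (A : M →ₗ[R] M) : M →ₗ[R] M →ₗ[R] M :=
  LinearMap.mk₂ R (fun x y => ε y • A x - ε x • A y)
    (fun x x' y => by simp only [map_add, add_smul, smul_add]; abel)
    (fun c x y => by simp only [map_smul, smul_eq_mul, mul_smul, smul_sub]; module)
    (fun x y y' => by simp only [map_add, add_smul, smul_add]; abel)
    (fun c x y => by simp only [map_smul, smul_eq_mul, mul_smul, smul_sub]; module)

@[simp]
theorem wedge_apply (ε : M →ₗ[R] R) (A : M →ₗ[R] M) (x y : M) :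
    wedge ε A x y = ε y • A x - ε x • A y := rfl

theorem wedge_swap (ε : M →ₗ[R] R) (A : M →ₗ[R] M) (x y : M) :
    wedge ε A y x = -wedge ε A x y := by
  simp only [wedge_apply, neg_sub]

theorem jacobiator_wedge (ε : M →ₗ[R] R) (A : M →ₗ[R] M) (c : R) (hA : ∀ x, ε (A x) = c * ε x)
    (x y z : M) : jacobiator (wedge ε A) x y z = 0 := by
  simp only [jacobiator, wedge_apply, map_sub, map_smul, hA]
  module

theorem coboundary_wedge (B : M →ₗ[R] M →ₗ[R] M) (ε : M →ₗ[R] R) (A : M →ₗ[R] M)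
    (hB : ∀ x y, B y x = -B x y) (hε : ∀ x y, ε (B x y) = 0)
    (hA : ∀ x y, A (B x y) = B (A x) y + B x (A y)) (x y z : M) :
    coboundary B (wedge ε A) x y z = 0 := by
  simp only [coboundary, wedge_apply, hε, map_sub, map_smul, hA, zero_smul, sub_zero]
  rw [hB (A y) x, hB (A z) x, hB (A z) y, hB (A x) y, hB (A x) z, hB (A y) z]
  module

end Deformation

def brL : V →ₗ[ℝ] V →ₗ[ℝ] V :=
  LinearMap.mk₂ ℝ br
    (fun x x' y => by simp only [br, Pi.add_apply, ← add_smul]; congr 1; ring)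
    (fun c x y => by simp only [br, Pi.smul_apply, smul_eq_mul, smul_smul]; congr 1; ring)
    (fun x y y' => by simp only [br, Pi.add_apply, ← add_smul]; congr 1; ring)
    (fun c x y => by simp only [br, Pi.smul_apply, smul_eq_mul, smul_smul]; congr 1; ring)

@[simp]
theorem brL_apply (x y : V) : brL x y = br x y := rfl

theorem br_swap (x y : V) : br y x = -br x y := by
  simp only [br, ← neg_smul]
  congr 1
  ring

theorem br_apply_two (x y : V) : br x y 2 = 0 := by
  simp [br, e]

theorem br_br (x y z : V) : br x (br y z) = 0 := by
  simp [br, e]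

theorem jacobiator_brL (x y z : V) : jacobiator brL x y z = 0 := by
  simp only [jacobiator, brL_apply, br_br, add_zero]

/-- The column of `e₃` is invisible in `wedge (LinearMap.proj 2) D`; it is chosen so that `D` is a
derivation of `h₂`. -/
def phi7Derivation (p q r : ℝ) : V →ₗ[ℝ] V :=
  Matrix.toLin' !![p, 1, 0, 0, 0;
                   0, q, 0, 1, 0;
                   0, 0, q + r - p, 0, 0;
                   0, 0, -1, r, 0;
                   0, 0, 0, 0, q + r]

theorem phi7Derivation_apply_two (p q r : ℝ) (x : V) :
    phi7Derivation p q r x 2 = (q + r - p) * x 2 := by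
  simp [phi7Derivation, Matrix.mulVec, dotProduct, Fin.sum_univ_five]

theorem phi7Derivation_br (p q r : ℝ) (x y : V) :
    phi7Derivation p q r (br x y)
      = br (phi7Derivation p q r x) y + br x (phi7Derivation p q r y) := by
  funext i
  fin_cases i <;> simp [phi7Derivation, Matrix.mulVec, dotProduct, Fin.sum_univ_five, br, e]
  all_goals ring

theorem phi7_eq_wedge (p q r : ℝ) (x y : V) :
    phi7 p q r x y = wedge (LinearMap.proj 2) (phi7Derivation p q r) x y := by
  funext i
  fin_cases i <;> simp [phi7, phi7Derivation, dotProduct, Fin.sum_univ_five, e]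
  all_goals ring

/-- For arbitrary scalars `p, q, r`, `φ₇(p,q,r)` is a 2-cocycle of `h₂`, and
`[x,y]_t = [x,y] + t φ₇(p,q,r)(x,y)` satisfies the Jacobi identity for every
`t`. -/
theorem phi7_cocycle_and_jacobi (p q r : ℝ) :
    IsCocycle (phi7 p q r) ∧
      ∀ (t : ℝ) (x y z : V),
        brt t (phi7 p q r) x (brt t (phi7 p q r) y z)
          + brt t (phi7 p q r) y (brt t (phi7 p q r) z x)
          + brt t (phi7 p q r) z (brt t (phi7 p q r) x y) = 0 := by
  set φ := wedge (LinearMap.proj 2) (phi7Derivation p q r)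
  have hφ : phi7 p q r = fun x y => φ x y := funext₂ (phi7_eq_wedge p q r)
  have hcocycle : ∀ x y z, coboundary brL φ x y z = 0 :=
    coboundary_wedge brL _ _ br_swap br_apply_two (phi7Derivation_br p q r)
  refine ⟨fun x y z => by simpa [coboundary, hφ] using hcocycle x y z, fun t x y z => ?_⟩
  have hjacobi := jacobiator_add_smul brL φ t br_swap (wedge_swap _ _) x y z
  rw [jacobiator_brL, hcocycle, jacobiator_wedge _ _ _ (phi7Derivation_apply_two p q r)] at hjacobi
  simpa [jacobiator, brt, hφ] using hjacobi
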